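/- arXiv:2102.09310 — 6 statements merged into one kernel-verified Lean document; each statement's English description precedes it below -/
import Mathlib

section
/- Let $X$ and $Z$ be nonempty sets, and let $\nu : X \to \mathbb{R}^n$ and $\psi : Z \to \mathbb{R}^m$ be maps such that the set $\{(\nu(x),1) : x \in X\}$ spans $\mathbb{R}^{n+1}$ and the set $\{(\psi(z),1) : z \in Z\}$ spans $\mathbb{R}^{m+1}$ (i.e. the images of $\nu$ and $\psi$ affinely span $\mathbb{R}^n$ resp. $\mathbb{R}^m$). Suppose $f : Z \to \mathbb{R}^n$, $g : X \to \mathbb{R}^m$, $r : Z \to \mathbb{R}$ and $s : X \to \mathbb{R}$ satisfy $\langle \nu(x), f(z)\rangle + r(z) = \langle \psi(z), g(x)\rangle + s(x)$ for all $x \in X$ and $z \in Z$. Then there exist a matrix $W \in \mathbb{R}^{n \times m}$ and vectors $u \in \mathbb{R}^n$, $v \in \mathbb{R}^m$ such that $f(z) = W\psi(z) + u$ for all $z \in Z$ and $g(x) = W^{\mathsf T}\nu(x) + v$ for all $x \in X$. -/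
/-!
Pairing `(ψ z, 1)` with `(g x, s x)` turns the hypothesis into
`⟪(ψ z, 1), (g x, s x)⟫ = ⟪(ν x, 1), (f z, r z)⟫`. As the vectors `(ψ z, 1)` span, the functional
`⟪·, (g x, s x)⟫` is determined by the right-hand side, which is linear in `(ν x, 1)`; hence `g` is
affine in `ν`, say `g x = M ν x + v`. Substituting this back, the functional
`⟪·, (f z - Mᵀ ψ z, r z - ⟪ψ z, v⟫)⟫` takes the value `s x` at every `(ν x, 1)`; as these vectors
span, the pair is the same for all `z`.
-/

open Matrix

theorem exists_linearMap_apply_eq_of_pairing_eq {K V W U X Z : Type*} [Field K]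
    [AddCommGroup V] [Module K V] [AddCommGroup W] [Module K W] [AddCommGroup U] [Module K U]
    (e : U →ₗ[K] Module.Dual K W) (he : Function.Injective e)
    (a : X → V) (b : Z → W) (hb : Submodule.span K (Set.range b) = ⊤)
    (c : X → U) (F : Z → Module.Dual K V) (h : ∀ x z, e (c x) (b z) = F z (a x)) :
    ∃ T : V →ₗ[K] U, ∀ x, T (a x) = c x := by
  -- `Ψ` is onto, so `Ψ.dualMap ∘ₗ e` has a linear left inverse, and it sends `c x` to a
  -- functional that `h` expresses linearly in `a x`.
  set Ψ := Finsupp.linearCombination K b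
  have hΨ : Function.Surjective Ψ := by
    rw [← LinearMap.range_eq_top, Finsupp.range_linearCombination, hb]
  obtain ⟨L, hL⟩ := (Ψ.dualMap ∘ₗ e).exists_leftInverse_of_injective
    (LinearMap.ker_eq_bot.mpr ((LinearMap.dualMap_injective_of_surjective hΨ).comp he))
  have hF x : (Finsupp.linearCombination K F).flip (a x) = Ψ.dualMap (e (c x)) :=
    Finsupp.lhom_ext fun z t => by simp [Ψ, h]
  exact ⟨L ∘ₗ (Finsupp.linearCombination K F).flip, fun x => by
    rw [LinearMap.comp_apply, hF, ← LinearMap.comp_apply Ψ.dualMap, ← LinearMap.comp_apply L, hL,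
      LinearMap.id_apply]⟩

section AffinePairing

variable (K κ : Type*) [CommRing K] [Fintype κ]

def affinePairing : ((κ → K) × K) →ₗ[K] Module.Dual K ((κ → K) × K) :=
  LinearMap.mk₂ K (fun p w => w.1 ⬝ᵥ p.1 + w.2 * p.2)
    (fun _ _ _ => by simp only [Prod.fst_add, Prod.snd_add, dotProduct_add]; ring)
    (fun _ _ _ => by simp only [Prod.smul_fst, Prod.smul_snd, dotProduct_smul, smul_eq_mul]; ring)
    (fun _ _ _ => by simp only [Prod.fst_add, Prod.snd_add, add_dotProduct]; ring)
    (fun _ _ _ => by simp only [Prod.smul_fst, Prod.smul_snd, smul_dotProduct, smul_eq_mul]; ring)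

variable {K κ}

@[simp]
theorem affinePairing_apply (p w : (κ → K) × K) : affinePairing K κ p w = w.1 ⬝ᵥ p.1 + w.2 * p.2 :=
  rfl

theorem affinePairing_injective [DecidableEq κ] : Function.Injective (affinePairing K κ) := by
  intro p q hpq
  have h₁ j := LinearMap.congr_fun hpq (Pi.single j 1, 0)
  have h₂ := LinearMap.congr_fun hpq (0, 1)
  simp only [affinePairing_apply, single_dotProduct, one_mul, zero_mul, add_zero,
    zero_dotProduct, zero_add] at h₁ h₂
  exact Prod.ext (funext h₁) h₂

end AffinePairing

theorem LinearMap.exists_mulVec_add_eq_apply_one {K ι κ : Type*} [CommRing K] [Fintype ι]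
    [DecidableEq ι] (L : (ι → K) × K →ₗ[K] κ → K) :
    ∃ (M : Matrix κ ι K) (v : κ → K), ∀ p, L (p, 1) = M *ᵥ p + v :=
  ⟨LinearMap.toMatrix' (L ∘ₗ LinearMap.inl K _ K), L (0, 1), fun p => by
    rw [LinearMap.toMatrix'_mulVec, LinearMap.comp_apply, LinearMap.inl_apply, ← map_add,
      Prod.mk_add_mk, add_zero, zero_add]⟩

section AffineStatistics

variable {K X Z ι κ : Type*} [Field K] [Fintype ι] [DecidableEq ι] [Fintype κ]
  (ν : X → ι → K) (ψ : Z → κ → K) (f : Z → ι → K) (g : X → κ → K) (r : Z → K) (s : X → K)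

theorem exists_mulVec_add_of_dotProduct_eq [DecidableEq κ]
    (hψ : Submodule.span K (Set.range fun z => (ψ z, (1 : K))) = ⊤)
    (h : ∀ x z, ν x ⬝ᵥ f z + r z = ψ z ⬝ᵥ g x + s x) :
    ∃ (M : Matrix κ ι K) (v : κ → K), ∀ x, g x = M *ᵥ ν x + v := by
  obtain ⟨T, hT⟩ := exists_linearMap_apply_eq_of_pairing_eq (affinePairing K κ)
    affinePairing_injective (fun x => (ν x, 1)) _ hψ (fun x => (g x, s x))
    (fun z => affinePairing K ι (f z, r z)) fun x z => by simp [h]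
  obtain ⟨M, v, hMv⟩ := (LinearMap.fst K _ K ∘ₗ T).exists_mulVec_add_eq_apply_one
  exact ⟨M, v, fun x => by rw [← hMv, LinearMap.comp_apply, hT, LinearMap.fst_apply]⟩

theorem exists_transpose_mulVec_add_of_dotProduct_eq [Nonempty Z]
    (hν : Submodule.span K (Set.range fun x => (ν x, (1 : K))) = ⊤)
    (h : ∀ x z, ν x ⬝ᵥ f z + r z = ψ z ⬝ᵥ g x + s x)
    {M : Matrix κ ι K} {v : κ → K} (hg : ∀ x, g x = M *ᵥ ν x + v) :
    ∃ u, ∀ z, f z = Mᵀ *ᵥ ψ z + u := by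
  have hs x z : affinePairing K ι (f z - Mᵀ *ᵥ ψ z, r z - ψ z ⬝ᵥ v) (ν x, 1) = s x := by
    have hxz := h x z
    rw [hg, dotProduct_add, dotProduct_mulVec, ← mulVec_transpose, dotProduct_comm (Mᵀ *ᵥ ψ z)] at hxz
    simp only [affinePairing_apply, dotProduct_sub, one_mul]
    linear_combination hxz
  obtain ⟨z₀⟩ := ‹Nonempty Z›
  have hconst z : (f z - Mᵀ *ᵥ ψ z, r z - ψ z ⬝ᵥ v) = (f z₀ - Mᵀ *ᵥ ψ z₀, r z₀ - ψ z₀ ⬝ᵥ v) :=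
    affinePairing_injective (LinearMap.ext_on_range hν fun x => (hs x z).trans (hs x z₀).symm)
  exact ⟨_, fun z => sub_eq_iff_eq_add'.mp (congrArg Prod.fst (hconst z))⟩

end AffineStatistics

theorem stmt_0_general {X Z : Type*} [Nonempty Z] {n m : ℕ}
    (ν : X → Fin n → ℝ) (ψ : Z → Fin m → ℝ)
    (hν : Submodule.span ℝ (Set.range (fun x => ((ν x, (1 : ℝ)) : (Fin n → ℝ) × ℝ))) = ⊤)
    (hψ : Submodule.span ℝ (Set.range (fun z => ((ψ z, (1 : ℝ)) : (Fin m → ℝ) × ℝ))) = ⊤)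
    (f : Z → Fin n → ℝ) (g : X → Fin m → ℝ) (r : Z → ℝ) (s : X → ℝ)
    (h : ∀ x z, (∑ i, ν x i * f z i) + r z = (∑ j, ψ z j * g x j) + s x) :
    ∃ (W : Matrix (Fin n) (Fin m) ℝ) (u : Fin n → ℝ) (v : Fin m → ℝ),
      (∀ z, f z = W.mulVec (ψ z) + u) ∧ (∀ x, g x = W.transpose.mulVec (ν x) + v) := by
  obtain ⟨M, v, hg⟩ := exists_mulVec_add_of_dotProduct_eq ν ψ f g r s hψ h
  obtain ⟨u, hf⟩ := exists_transpose_mulVec_add_of_dotProduct_eq ν ψ f g r s hν h hg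
  exact ⟨Mᵀ, u, v, hf, by simpa only [transpose_transpose] using hg⟩

/-- If `⟨ν x, f z⟩ + r z = ⟨ψ z, g x⟩ + s x` for all `x, z`, and the images of
`ν` resp. `ψ` affinely span `ℝ^n` resp. `ℝ^m` (i.e. `{(ν x, 1)}` spans `ℝ^{n+1}` and
`{(ψ z, 1)}` spans `ℝ^{m+1}`), then `f` and `g` are affine in the opposite statistics with
transposed interaction matrices. -/
theorem stmt_0 {X Z : Type*} [Nonempty X] [Nonempty Z] {n m : ℕ}
    (ν : X → Fin n → ℝ) (ψ : Z → Fin m → ℝ)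
    (hν : Submodule.span ℝ (Set.range (fun x => ((ν x, (1 : ℝ)) : (Fin n → ℝ) × ℝ))) = ⊤)
    (hψ : Submodule.span ℝ (Set.range (fun z => ((ψ z, (1 : ℝ)) : (Fin m → ℝ) × ℝ))) = ⊤)
    (f : Z → Fin n → ℝ) (g : X → Fin m → ℝ) (r : Z → ℝ) (s : X → ℝ)
    (h : ∀ x z, (∑ i, ν x i * f z i) + r z = (∑ j, ψ z j * g x j) + s x) :
    ∃ (W : Matrix (Fin n) (Fin m) ℝ) (u : Fin n → ℝ) (v : Fin m → ℝ),
      (∀ z, f z = W.mulVec (ψ z) + u) ∧ (∀ x, g x = W.transpose.mulVec (ν x) + v) :=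
  stmt_0_general ν ψ hν hψ f g r s h
end

section
/- Let $X$ and $Z$ be nonempty finite sets, $\nu : X \to \mathbb{R}^n$ and $\psi : Z \to \mathbb{R}^m$ sufficient statistics such that $\{(\nu(x),1) : x \in X\}$ spans $\mathbb{R}^{n+1}$ and $\{(\psi(z),1) : z \in Z\}$ spans $\mathbb{R}^{m+1}$, $h : X \to \mathbb{R}_{>0}$ and $h' : Z \to \mathbb{R}_{>0}$ base measures, and $\pi : Z \to \mathbb{R}_{>0}$ a prior probability mass function. Given networks $f : Z \to \mathbb{R}^n$ and $g : X \to \mathbb{R}^m$, define the decoder $p(x\mid z) = h(x)\exp\langle \nu(x), f(z)\rangle / \sum_{x'} h(x')\exp\langle \nu(x'), f(z)\rangle$, the encoder $q(z\mid x) = h'(z)\exp\langle \psi(z), g(x)\rangle / \sum_{z'} h'(z')\exp\langle \psi(z'), g(x)\rangle$, and the posterior $p(z\mid x) = p(x\mid z)\pi(z) / \sum_{z'} p(x\mid z')\pi(z')$. If $q(z\mid x) = p(z\mid x)$ for all $x \in X$ and $z \in Z$, then there exist a matrix $W \in \mathbb{R}^{n\times m}$ and vectors $u \in \mathbb{R}^n$,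 $v \in \mathbb{R}^m$ such that $f(z) = W\psi(z) + u$ for all $z \in Z$ and $g(x) = W^{\mathsf T}\nu(x) + v$ for all $x \in X$. -/
open Finset

lemma span_zero_aux {m : ℕ} {Z : Type*} (ψ : Z → Fin m → ℝ)
    (hψ : Submodule.span ℝ (Set.range (fun z => ((ψ z, (1 : ℝ)) : (Fin m → ℝ) × ℝ))) = ⊤)
    (v : Fin m → ℝ) (c : ℝ) (hvc : ∀ z, (∑ j, ψ z j * v j) + c = 0) :
    v = 0 ∧ c = 0 := by
  let φ : ((Fin m → ℝ) × ℝ) →ₗ[ℝ] ℝ :=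
    { toFun := fun w => (∑ j, w.1 j * v j) + w.2 * c
      map_add' := fun w w' => by
        simp only [Prod.fst_add, Prod.snd_add, Pi.add_apply, add_mul, Finset.sum_add_distrib]
        ring
      map_smul' := fun r w => by
        simp only [Prod.smul_fst, Prod.smul_snd, Pi.smul_apply, smul_eq_mul,
          RingHom.id_apply, Finset.mul_sum, mul_assoc, mul_add] }
  have hzero : φ = 0 := by
    apply LinearMap.ext_on hψ
    rintro w ⟨z, rfl⟩
    simpa [φ] using hvc z
  constructor
  · funext j
    have := LinearMap.congr_fun hzero ((Pi.single j 1 : Fin m → ℝ), (0:ℝ))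
    simpa [φ, Pi.single_apply, ite_mul] using this
  · have := LinearMap.congr_fun hzero ((0 : Fin m → ℝ), (1:ℝ))
    simpa [φ] using this

/-- consistency (encoder = posterior) of an exponential family VAE on finite
spaces forces the decoder/encoder networks `f`, `g` to be generalized linear models in the
sufficient statistics, with transposed interaction matrices. -/
theorem stmt_1 {X Z : Type*} [Fintype X] [Fintype Z] [Nonempty X] [Nonempty Z] {n m : ℕ}
    (ν : X → Fin n → ℝ) (ψ : Z → Fin m → ℝ)
    (hν : Submodule.span ℝ (Set.range (fun x => ((ν x, (1 : ℝ)) : (Fin n → ℝ) × ℝ))) = ⊤)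
    (hψ : Submodule.span ℝ (Set.range (fun z => ((ψ z, (1 : ℝ)) : (Fin m → ℝ) × ℝ))) = ⊤)
    (h : X → ℝ) (h' : Z → ℝ) (hh : ∀ x, 0 < h x) (hh' : ∀ z, 0 < h' z)
    (π : Z → ℝ) (hπ : ∀ z, 0 < π z) (hπ1 : ∑ z, π z = 1)
    (f : Z → Fin n → ℝ) (g : X → Fin m → ℝ)
    (p : Z → X → ℝ)
    (hp : ∀ z x, p z x = h x * Real.exp (∑ i, ν x i * f z i) /
        ∑ x', h x' * Real.exp (∑ i, ν x' i * f z i))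
    (q : X → Z → ℝ)
    (hq : ∀ x z, q x z = h' z * Real.exp (∑ j, ψ z j * g x j) /
        ∑ z', h' z' * Real.exp (∑ j, ψ z' j * g x j))
    (post : X → Z → ℝ)
    (hpost : ∀ x z, post x z = p z x * π z / ∑ z', p z' x * π z')
    (heq : ∀ x z, q x z = post x z) :
    ∃ (W : Matrix (Fin n) (Fin m) ℝ) (u : Fin n → ℝ) (v : Fin m → ℝ),
      (∀ z, f z = W.mulVec (ψ z) + u) ∧ (∀ x, g x = W.transpose.mulVec (ν x) + v) := by
  classical
  have hA : ∀ z, 0 < ∑ x', h x' * Real.exp (∑ i, ν x' i * f z i) :=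
    fun z => Finset.sum_pos (fun x _ => mul_pos (hh x) (Real.exp_pos _)) Finset.univ_nonempty
  have hC : ∀ x, 0 < ∑ z', h' z' * Real.exp (∑ j, ψ z' j * g x j) :=
    fun x => Finset.sum_pos (fun z _ => mul_pos (hh' z) (Real.exp_pos _)) Finset.univ_nonempty
  have hppos : ∀ z x, 0 < p z x := fun z x => by
    rw [hp]; exact div_pos (mul_pos (hh x) (Real.exp_pos _)) (hA z)
  have hD : ∀ x, 0 < ∑ z', p z' x * π z' :=
    fun x => Finset.sum_pos (fun z _ => mul_pos (hppos z x) (hπ z)) Finset.univ_nonempty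
  set a : X → ℝ := fun x => Real.log (∑ z', p z' x * π z')
      - Real.log (∑ z', h' z' * Real.exp (∑ j, ψ z' j * g x j)) - Real.log (h x) with ha_def
  set b : Z → ℝ := fun z => Real.log (∑ x', h x' * Real.exp (∑ i, ν x' i * f z i))
      + Real.log (h' z) - Real.log (π z) with hb_def
  have key : ∀ x z, (∑ i, ν x i * f z i) - (∑ j, ψ z j * g x j) = a x + b z := by
    intro x z
    have h1 : Real.log (q x z) = Real.log (h' z) + (∑ j, ψ z j * g x j)
        - Real.log (∑ z', h' z' * Real.exp (∑ j, ψ z' j * g x j)) := by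
      rw [hq, Real.log_div (mul_pos (hh' z) (Real.exp_pos _)).ne' (hC x).ne',
        Real.log_mul (hh' z).ne' (Real.exp_pos _).ne', Real.log_exp]
    have h2 : Real.log (p z x) = Real.log (h x) + (∑ i, ν x i * f z i)
        - Real.log (∑ x', h x' * Real.exp (∑ i, ν x' i * f z i)) := by
      rw [hp, Real.log_div (mul_pos (hh x) (Real.exp_pos _)).ne' (hA z).ne',
        Real.log_mul (hh x).ne' (Real.exp_pos _).ne', Real.log_exp]
    have h3 : Real.log (post x z) = Real.log (p z x) + Real.log (π z)
        - Real.log (∑ z', p z' x * π z') := by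
      rw [hpost, Real.log_div (mul_pos (hppos z x) (hπ z)).ne' (hD x).ne',
        Real.log_mul (hppos z x).ne' (hπ z).ne']
    have h4 : Real.log (q x z) = Real.log (post x z) := by rw [heq]
    rw [h1, h3, h2] at h4
    simp only [ha_def, hb_def]
    linarith
  -- linear maps
  let E : ((Fin m → ℝ) × ℝ) →ₗ[ℝ] (Z → ℝ) :=
    { toFun := fun w z => (∑ j, ψ z j * w.1 j) + w.2
      map_add' := fun w w' => by
        funext z
        simp only [Prod.fst_add, Prod.snd_add, Pi.add_apply, mul_add,
          Finset.sum_add_distrib]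
        ring
      map_smul' := fun r w => by
        funext z
        simp only [Prod.smul_fst, Prod.smul_snd, Pi.smul_apply, smul_eq_mul,
          RingHom.id_apply, Finset.mul_sum, mul_add]
        congr 1
        apply Finset.sum_congr rfl
        intros; ring }
  have hEker : LinearMap.ker E = ⊥ := by
    rw [LinearMap.ker_eq_bot']
    intro w hw
    have hvc : ∀ z, (∑ j, ψ z j * w.1 j) + w.2 = 0 := fun z => congrFun hw z
    obtain ⟨h1, h2⟩ := span_zero_aux ψ hψ w.1 w.2 hvc
    exact Prod.ext h1 h2
  obtain ⟨G, hG⟩ := LinearMap.exists_leftInverse_of_injective E hEker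
  let M : ((Fin n → ℝ) × ℝ) →ₗ[ℝ] (Z → ℝ) :=
    { toFun := fun w z => (∑ i, w.1 i * f z i) - w.2 * b z
      map_add' := fun w w' => by
        funext z
        simp only [Prod.fst_add, Prod.snd_add, Pi.add_apply, add_mul,
          Finset.sum_add_distrib]
        ring
      map_smul' := fun r w => by
        funext z
        simp only [Prod.smul_fst, Prod.smul_snd, Pi.smul_apply, smul_eq_mul,
          RingHom.id_apply, Finset.mul_sum, mul_sub, mul_assoc] }
  let L := G.comp M
  have hME : ∀ x, M (ν x, 1) = E (g x, a x) := by
    intro x; funext z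
    have hk := key x z
    show (∑ i, ν x i * f z i) - 1 * b z = (∑ j, ψ z j * g x j) + a x
    linarith
  have hL : ∀ x, L (ν x, 1) = (g x, a x) := by
    intro x
    have h1 : L (ν x, 1) = G (E (g x, a x)) := by
      show G (M (ν x, 1)) = G (E (g x, a x))
      rw [hME x]
    rw [h1, ← LinearMap.comp_apply, hG, LinearMap.id_apply]
  have hdecomp : ∀ (w : Fin n → ℝ) (t : ℝ),
      ((w, t) : (Fin n → ℝ) × ℝ)
        = (∑ i, w i • (((Pi.single i 1 : Fin n → ℝ), (0:ℝ)) : (Fin n → ℝ) × ℝ))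
          + t • (((0 : Fin n → ℝ), (1:ℝ)) : (Fin n → ℝ) × ℝ) := by
    intro w t
    refine Prod.ext ?_ ?_
    · funext k
      simp [Prod.fst_sum, Finset.sum_apply, Pi.single_apply, mul_ite]
    · simp [Prod.snd_sum]
  have hLdecomp : ∀ (w : Fin n → ℝ) (t : ℝ),
      L (w, t) = (∑ i, w i • L ((Pi.single i 1 : Fin n → ℝ), (0:ℝ)))
        + t • L ((0 : Fin n → ℝ), (1:ℝ)) := by
    intro w t
    rw [hdecomp w t, map_add, map_smul, map_sum]
    simp only [map_smul]
  set W : Matrix (Fin n) (Fin m) ℝ := fun i j => (L ((Pi.single i 1 : Fin n → ℝ), (0:ℝ))).1 j with hW_def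
  set r : Fin n → ℝ := fun i => (L ((Pi.single i 1 : Fin n → ℝ), (0:ℝ))).2 with hr_def
  set v : Fin m → ℝ := (L ((0 : Fin n → ℝ), (1:ℝ))).1 with hv_def
  set c : ℝ := (L ((0 : Fin n → ℝ), (1:ℝ))).2 with hc_def
  have hLx : ∀ x, ((∑ i, ν x i • L ((Pi.single i 1 : Fin n → ℝ), (0:ℝ)))
      + (1:ℝ) • L ((0 : Fin n → ℝ), (1:ℝ))) = (g x, a x) := by
    intro x
    rw [← hLdecomp (ν x) 1]
    exact hL x
  have hg : ∀ x j, g x j = (∑ i, ν x i * W i j) + v j := by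
    intro x j
    have h1 := congrArg Prod.fst (hLx x)
    have h2 := congrFun h1 j
    simpa [Prod.fst_sum, Finset.sum_apply, hW_def, hv_def] using h2.symm
  have haf : ∀ x, a x = (∑ i, ν x i * r i) + c := by
    intro x
    have h1 := congrArg Prod.snd (hLx x)
    simpa [Prod.snd_sum, hr_def, hc_def] using h1.symm
  refine ⟨W, r, v, ?_, ?_⟩
  · intro z
    have hvc : ∀ x, (∑ i, ν x i * (f z i - W.mulVec (ψ z) i - r i))
        + (-(∑ j, ψ z j * v j) - b z - c) = 0 := by
      intro x
      have hk := key x z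
      have hgsum : (∑ j, ψ z j * g x j)
          = (∑ i, ν x i * W.mulVec (ψ z) i) + ∑ j, ψ z j * v j := by
        have e1 : (∑ j, ψ z j * g x j)
            = ∑ j, (ψ z j * (∑ i, ν x i * W i j) + ψ z j * v j) := by
          apply Finset.sum_congr rfl
          intro j _
          rw [hg x j]; ring
        rw [e1, Finset.sum_add_distrib]
        congr 1
        simp only [Matrix.mulVec, dotProduct, Finset.mul_sum]
        rw [Finset.sum_comm]
        apply Finset.sum_congr rfl
        intro i _
        apply Finset.sum_congr rfl
        intro j _
        ring
      have expand : (∑ i, ν x i * (f z i - W.mulVec (ψ z) i - r i))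
          = (∑ i, ν x i * f z i) - (∑ i, ν x i * W.mulVec (ψ z) i)
            - (∑ i, ν x i * r i) := by
        simp only [mul_sub, Finset.sum_sub_distrib]
      have haA := haf x
      rw [expand]
      linarith
    obtain ⟨h1, h2⟩ := span_zero_aux ν hν _ _ hvc
    funext i
    have := congrFun h1 i
    have h3 : f z i - W.mulVec (ψ z) i - r i = 0 := this
    show f z i = W.mulVec (ψ z) i + r i
    linarith
  · intro x
    funext j
    have := hg x j
    show g x j = W.transpose.mulVec (ν x) j + v j
    rw [this]
    congr 1
    simp [Matrix.mulVec, dotProduct, Matrix.transpose_apply, mul_comm]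
end

section
/- Let $X$ and $Z$ be nonempty finite sets, $\nu : X \to \mathbb{R}^n$, $\psi : Z \to \mathbb{R}^m$, $h : X \to \mathbb{R}_{>0}$ a base measure, $\pi : Z \to \mathbb{R}_{>0}$ a prior probability mass function, $W \in \mathbb{R}^{n\times m}$ and $a \in \mathbb{R}^n$. Define the affine decoder $p(x\mid z) = h(x)\exp\big(\langle \nu(x), W\psi(z) + a\rangle - A(z)\big)$ with $A(z) = \log \sum_{x'} h(x')\exp\langle \nu(x'), W\psi(z) + a\rangle$. Then the posterior $p(z\mid x) = p(x\mid z)\pi(z)/\sum_{z'} p(x\mid z')\pi(z')$ has the form $p(z\mid x) = \beta(z)\exp\langle \psi(z), W^{\mathsf T}\nu(x)\rangle \big/ \sum_{z'} \beta(z')\exp\langle \psi(z'), W^{\mathsf T}\nu(x)\rangle$ for all $x, z$, where $\beta(z) = \pi(z)\exp(-A(z)) > 0$. In particular, the dependence of the posterior on $x$ enters only through the affine map $x \mapsto W^{\mathsf T}\nu(x)$ of the decoder's sufficient statistics. -/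
/-- for an affine exponential family decoder, the exact posterior is an
exponential family encoder whose natural parameter is the affine map `Wᵀ ν(x)`, with
positive base weights `β(z) = π(z) exp(-A(z))`. -/
theorem stmt_3 {X Z : Type*} [Fintype X] [Fintype Z] [Nonempty X] [Nonempty Z] {n m : ℕ}
    (ν : X → Fin n → ℝ) (ψ : Z → Fin m → ℝ)
    (h : X → ℝ) (hh : ∀ x, 0 < h x)
    (π : Z → ℝ) (hπ : ∀ z, 0 < π z) (hπ1 : ∑ z, π z = 1)
    (W : Matrix (Fin n) (Fin m) ℝ) (a : Fin n → ℝ)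
    (A : Z → ℝ)
    (hA : ∀ z, A z = Real.log (∑ x', h x' * Real.exp (∑ i, ν x' i * (W.mulVec (ψ z) + a) i)))
    (p : Z → X → ℝ)
    (hp : ∀ z x, p z x = h x * Real.exp ((∑ i, ν x i * (W.mulVec (ψ z) + a) i) - A z))
    (post : X → Z → ℝ)
    (hpost : ∀ x z, post x z = p z x * π z / ∑ z', p z' x * π z')
    (β : Z → ℝ) (hβ : ∀ z, β z = π z * Real.exp (-A z)) :
    (∀ z, 0 < β z) ∧
    (∀ x z, post x z = β z * Real.exp (∑ j, ψ z j * W.transpose.mulVec (ν x) j) /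
      ∑ z', β z' * Real.exp (∑ j, ψ z' j * W.transpose.mulVec (ν x) j)) := by

  have hβpos : ∀ z, 0 < β z := fun z => by
    rw [hβ]; exact mul_pos (hπ z) (Real.exp_pos _)
  refine ⟨hβpos, fun x z => ?_⟩
  -- swap the bilinear sum
  have key : ∀ z', (∑ i, ν x i * (W.mulVec (ψ z') + a) i)
      = (∑ j, ψ z' j * W.transpose.mulVec (ν x) j) + ∑ i, ν x i * a i := by
    intro z'
    have : (∑ i, ν x i * (W.mulVec (ψ z') + a) i)
        = (∑ i, ν x i * W.mulVec (ψ z') i) + ∑ i, ν x i * a i := by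
      rw [← Finset.sum_add_distrib]
      exact Finset.sum_congr rfl (fun i _ => by simp [mul_add])
    rw [this]
    congr 1
    simp only [Matrix.mulVec, Matrix.transpose_apply, dotProduct, Finset.mul_sum]
    rw [Finset.sum_comm]
    exact Finset.sum_congr rfl (fun i _ => Finset.sum_congr rfl (fun j _ => by ring))
  set c : ℝ := h x * Real.exp (∑ i, ν x i * a i) with hc
  have hcpos : 0 < c := mul_pos (hh x) (Real.exp_pos _)
  have hterm : ∀ z', p z' x * π z'
      = c * (β z' * Real.exp (∑ j, ψ z' j * W.transpose.mulVec (ν x) j)) := by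
    intro z'
    rw [hp, hβ, key z', hc]
    rw [show (∑ j, ψ z' j * W.transpose.mulVec (ν x) j) + (∑ i, ν x i * a i) - A z'
        = (∑ i, ν x i * a i) + ((∑ j, ψ z' j * W.transpose.mulVec (ν x) j) + (-A z')) by ring]
    rw [Real.exp_add, Real.exp_add]
    ring
  rw [hpost]
  simp only [hterm]
  rw [← Finset.mul_sum, mul_div_mul_left _ _ (ne_of_gt hcpos)]
end

section
/- Let $X$ and $Z$ be nonempty finite sets, $p_d$ a probability mass function on $X$, $\pi : Z \to \mathbb{R}_{>0}$ a prior probability mass function, $\nu : X \to \mathbb{R}^n$, $\psi : Z \to \mathbb{R}^m$, and $h : X \to \mathbb{R}_{>0}$. Consider the affine decoder family parametrized by $\theta = (W, a) \in \mathbb{R}^{n\times m} \times \mathbb{R}^n$ with $p_\theta(x\mid z) \propto h(x)\exp\langle \nu(x), W\psi(z) + a\rangle$ (normalized over $x$), and the encoder family $\mathcal{Q}$ of all conditional distributions of the form $q(z\mid x) \propto \beta(z)\exp\langle \psi(z), g(x)\rangle$ (normalized over $z$) with arbitrary $\beta : Z \to \mathbb{R}_{>0}$ and arbitrary $g : X \to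 \mathbb{R}^m$. Define the log-likelihood $L(\theta) = \sum_x p_d(x)\log \sum_z \pi(z) p_\theta(x\mid z)$ and the ELBO $L_B(\theta, q) = \sum_x p_d(x)\big[\sum_z q(z\mid x)\log p_\theta(x\mid z) - D_{KL}(q(\cdot\mid x)\,\|\,\pi)\big]$. Then: (i) $L_B(\theta, q) \le L(\theta)$ for all $\theta$ and all $q \in \mathcal{Q}$; (ii) for every $\theta$ there exists $q \in \mathcal{Q}$ with $L_B(\theta, q) = L(\theta)$; hence (iii) $\sup_{\theta, q\in\mathcal{Q}} L_B(\theta,q) = \sup_\theta L(\theta)$, and any global maximizer $(\theta^*, q^*)$ of $L_B$ satisfies $L(\theta^*) = \sup_\theta L(\theta)$, i.e. the approximation error is zero. -/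
/-!
At a data point `x`, the ELBO of an encoder `q` is `∑ q log (π p / q)` with `p = p_θ(x|·)`;
by Jensen's inequality for `log` it is at most the log-marginal `log ∑ π p`, with equality at
the posterior `q ∝ π p`. For an affine decoder the posterior is
`q(z|x) ∝ (π z / N z) exp ⟨ψ z, Wᵀ ν x⟩`, where `N z` is the decoder's normalizer, so it lies in
the encoder family. Hence `L θ = max_q L_B(θ, q)` for every `θ`, and the two suprema agree.
-/

open Finset Matrix

section Normalized

variable {ι : Type*} [Fintype ι]

noncomputable def normalized (w : ι → ℝ) : ι → ℝ := fun i => w i / ∑ j, w j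

theorem normalized_pos [Nonempty ι] {w : ι → ℝ} (hw : ∀ i, 0 < w i) (i : ι) :
    0 < normalized w i :=
  div_pos (hw i) (sum_pos (fun j _ => hw j) univ_nonempty)

theorem sum_normalized {w : ι → ℝ} (hw : ∑ i, w i ≠ 0) : ∑ i, normalized w i = 1 := by
  simp only [normalized, ← sum_div, div_self hw]

theorem normalized_mul_const (w : ι → ℝ) {c : ℝ} (hc : c ≠ 0) :
    normalized (fun i => w i * c) = normalized w := by
  funext i
  simp only [normalized, ← sum_mul, mul_div_mul_right _ _ hc]

end Normalized

section Elbo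

variable {ι : Type*} [Fintype ι]

/-- `∑ q log p - KL(q ‖ π)`. -/
noncomputable def elbo (q π p : ι → ℝ) : ℝ :=
  ∑ i, q i * Real.log (p i) - ∑ i, q i * Real.log (q i / π i)

theorem elbo_eq_sum_mul_log_div {q π p : ι → ℝ} (hq : ∀ i, q i ≠ 0) (hπ : ∀ i, π i ≠ 0)
    (hp : ∀ i, p i ≠ 0) : elbo q π p = ∑ i, q i * Real.log (π i * p i / q i) := by
  rw [elbo, ← sum_sub_distrib]
  refine sum_congr rfl fun i _ => ?_
  rw [Real.log_div (mul_ne_zero (hπ i) (hp i)) (hq i), Real.log_div (hq i) (hπ i),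
    Real.log_mul (hπ i) (hp i)]
  ring

theorem sum_mul_log_div_le_log_sum {q r : ι → ℝ} (hq : ∀ i, 0 < q i) (hq1 : ∑ i, q i = 1)
    (hr : ∀ i, 0 < r i) : ∑ i, q i * Real.log (r i / q i) ≤ Real.log (∑ i, r i) := by
  have jensen := strictConcaveOn_log_Ioi.concaveOn.le_map_sum (t := univ) (p := fun i => r i / q i)
    (fun i _ => (hq i).le) hq1 fun i _ => div_pos (hr i) (hq i)
  simpa only [smul_eq_mul, mul_div_cancel₀ _ (hq _).ne'] using jensen

theorem elbo_le_log_sum_mul {q π p : ι → ℝ} (hq : ∀ i, 0 < q i) (hq1 : ∑ i, q i = 1)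
    (hπ : ∀ i, 0 < π i) (hp : ∀ i, 0 < p i) : elbo q π p ≤ Real.log (∑ i, π i * p i) := by
  rw [elbo_eq_sum_mul_log_div (fun i => (hq i).ne') (fun i => (hπ i).ne') fun i => (hp i).ne']
  exact sum_mul_log_div_le_log_sum hq hq1 fun i => mul_pos (hπ i) (hp i)

theorem elbo_posterior [Nonempty ι] {π p : ι → ℝ} (hπ : ∀ i, 0 < π i) (hp : ∀ i, 0 < p i) :
    elbo (normalized fun i => π i * p i) π p = Real.log (∑ i, π i * p i) := by
  have hπp : ∀ i, 0 < π i * p i := fun i => mul_pos (hπ i) (hp i)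
  have hsum : ∑ i, π i * p i ≠ 0 := (sum_pos (fun i _ => hπp i) univ_nonempty).ne'
  rw [elbo_eq_sum_mul_log_div (fun i => (normalized_pos hπp i).ne') (fun i => (hπ i).ne')
    fun i => (hp i).ne']
  simp only [normalized, div_div_cancel₀ (hπp _).ne', ← sum_mul]
  rw [← sum_div, div_self hsum, one_mul]

end Elbo

theorem normalized_prior_mul_affine_decoder {X Z ι κ : Type*} [Fintype X] [Fintype Z]
    [Fintype ι] [Fintype κ] (π : Z → ℝ) (h : X → ℝ) (ν : X → ι → ℝ) (ψ : Z → κ → ℝ)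
    (W : Matrix ι κ ℝ) (a : ι → ℝ) {x : X} (hx : h x ≠ 0) :
    (normalized fun z => π z * normalized (fun x' => h x' * Real.exp (ν x' ⬝ᵥ (W *ᵥ ψ z + a))) x) =
      normalized fun z => π z / (∑ x', h x' * Real.exp (ν x' ⬝ᵥ (W *ᵥ ψ z + a))) *
        Real.exp (ψ z ⬝ᵥ (ν x ᵥ* W)) := by
  refine Eq.trans ?_ (normalized_mul_const _ (mul_ne_zero hx (Real.exp_pos (ν x ⬝ᵥ a)).ne'))
  congr 1
  funext z
  simp only [normalized, dotProduct_add, Real.exp_add, dotProduct_mulVec, dotProduct_comm (ψ z)]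
  ring

theorem sSup_eq_sSup_of_le_of_attained {α Θ Φ : Type*} [ConditionallyCompleteLinearOrder α]
    (P : Φ → Prop) (L : Θ → α) (LB : Θ → Φ → α)
    (hle : ∀ θ φ, P φ → LB θ φ ≤ L θ) (heq : ∀ θ, ∃ φ, P φ ∧ LB θ φ = L θ) :
    sSup {y | ∃ θ φ, P φ ∧ y = LB θ φ} = sSup {y | ∃ θ, y = L θ} := by
  refine csSup_eq_csSup_of_forall_exists_le ?_ ?_
  · rintro _ ⟨θ, φ, hφ, rfl⟩
    exact ⟨L θ, ⟨θ, rfl⟩, hle θ φ hφ⟩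
  · rintro _ ⟨θ, rfl⟩
    obtain ⟨φ, hφ, hθφ⟩ := heq θ
    exact ⟨LB θ φ, ⟨θ, φ, hφ, rfl⟩, hθφ.ge⟩

theorem stmt_4_general {X Z : Type*} [Fintype X] [Fintype Z] [Nonempty X] [Nonempty Z] {n m : ℕ}
    (pd : X → ℝ) (hpd : ∀ x, 0 ≤ pd x)
    (π : Z → ℝ) (hπ : ∀ z, 0 < π z)
    (ν : X → Fin n → ℝ) (ψ : Z → Fin m → ℝ)
    (h : X → ℝ) (hh : ∀ x, 0 < h x)
    (dec : Matrix (Fin n) (Fin m) ℝ × (Fin n → ℝ) → Z → X → ℝ)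
    (hdec : ∀ θ z x, dec θ z x =
        h x * Real.exp (∑ i, ν x i * ((θ.1).mulVec (ψ z) + θ.2) i) /
        ∑ x', h x' * Real.exp (∑ i, ν x' i * ((θ.1).mulVec (ψ z) + θ.2) i))
    (enc : (Z → ℝ) × (X → Fin m → ℝ) → X → Z → ℝ)
    (henc : ∀ φ x z, enc φ x z = φ.1 z * Real.exp (∑ j, ψ z j * φ.2 x j) /
        ∑ z', φ.1 z' * Real.exp (∑ j, ψ z' j * φ.2 x j))
    (L : Matrix (Fin n) (Fin m) ℝ × (Fin n → ℝ) → ℝ)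
    (hL : ∀ θ, L θ = ∑ x, pd x * Real.log (∑ z, π z * dec θ z x))
    (LB : Matrix (Fin n) (Fin m) ℝ × (Fin n → ℝ) → (Z → ℝ) × (X → Fin m → ℝ) → ℝ)
    (hLB : ∀ θ φ, LB θ φ = ∑ x, pd x * ((∑ z, enc φ x z * Real.log (dec θ z x)) -
        ∑ z, enc φ x z * Real.log (enc φ x z / π z))) :
    (∀ θ φ, (∀ z, 0 < φ.1 z) → LB θ φ ≤ L θ) ∧
    (∀ θ, ∃ φ, (∀ z, 0 < φ.1 z) ∧ LB θ φ = L θ) ∧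
    sSup {y | ∃ θ φ, (∀ z, 0 < φ.1 z) ∧ y = LB θ φ} = sSup {y | ∃ θ, y = L θ} ∧
    (∀ θs φs, (∀ z, 0 < φs.1 z) →
      (∀ θ φ, (∀ z, 0 < φ.1 z) → LB θ φ ≤ LB θs φs) → ∀ θ, L θ ≤ L θs) := by
  have hdec' : ∀ θ z, dec θ z = normalized fun x => h x * Real.exp (ν x ⬝ᵥ (θ.1 *ᵥ ψ z + θ.2)) :=
    fun θ z => funext (hdec θ z)
  have henc' : ∀ φ x, enc φ x = normalized fun z => φ.1 z * Real.exp (ψ z ⬝ᵥ φ.2 x) :=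
    fun φ x => funext (henc φ x)
  have hdec_pos : ∀ θ z x, 0 < dec θ z x := fun θ z x => by
    rw [hdec' θ z]; exact normalized_pos (fun x => mul_pos (hh x) (Real.exp_pos _)) x
  have hLB' : ∀ θ φ, LB θ φ = ∑ x, pd x * elbo (enc φ x) π fun z => dec θ z x := hLB
  have hle : ∀ θ φ, (∀ z, 0 < φ.1 z) → LB θ φ ≤ L θ := fun θ φ hφ => by
    rw [hLB', hL]
    refine sum_le_sum fun x _ => mul_le_mul_of_nonneg_left ?_ (hpd x)
    have hpos : ∀ z, 0 < φ.1 z * Real.exp (ψ z ⬝ᵥ φ.2 x) := fun z => mul_pos (hφ z) (Real.exp_pos _)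
    rw [henc']
    exact elbo_le_log_sum_mul (normalized_pos hpos) (sum_normalized (sum_pos (fun z _ => hpos z)
      univ_nonempty).ne') hπ fun z => hdec_pos θ z x
  have heq : ∀ θ, ∃ φ, (∀ z, 0 < φ.1 z) ∧ LB θ φ = L θ := fun θ => by
    have hN : ∀ z, 0 < ∑ x, h x * Real.exp (ν x ⬝ᵥ (θ.1 *ᵥ ψ z + θ.2)) := fun z =>
      sum_pos (fun x _ => mul_pos (hh x) (Real.exp_pos _)) univ_nonempty
    refine ⟨(fun z => π z / ∑ x, h x * Real.exp (ν x ⬝ᵥ (θ.1 *ᵥ ψ z + θ.2)), fun x => ν x ᵥ* θ.1),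
      fun z => div_pos (hπ z) (hN z), ?_⟩
    rw [hLB', hL]
    refine sum_congr rfl fun x _ => congrArg (pd x * ·) ?_
    rw [henc', ← normalized_prior_mul_affine_decoder π h ν ψ θ.1 θ.2 (hh x).ne']
    simp only [← hdec']
    exact elbo_posterior hπ fun z => hdec_pos θ z x
  refine ⟨hle, heq, sSup_eq_sSup_of_le_of_attained _ L LB hle heq, fun θs φs hφs hmax θ => ?_⟩
  obtain ⟨φ, hφ, hθφ⟩ := heq θ
  calc L θ = LB θ φ := hθφ.symm
    _ ≤ LB θs φs := hmax θ φ hφ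
    _ ≤ L θs := hle θs φs hφs

/-- Corollary 1: for an affine decoder family `θ = (W, a)` and the encoder
family of all `q(z|x) ∝ β(z) exp⟨ψ(z), g(x)⟩` with positive `β` and arbitrary `g`:
(i) the ELBO lower-bounds the likelihood, (ii) the bound is attained for every `θ`,
(iii) the suprema agree and any global ELBO maximizer maximizes the likelihood. -/
theorem stmt_4 {X Z : Type*} [Fintype X] [Fintype Z] [Nonempty X] [Nonempty Z] {n m : ℕ}
    (pd : X → ℝ) (hpd : ∀ x, 0 ≤ pd x) (hpd1 : ∑ x, pd x = 1)
    (π : Z → ℝ) (hπ : ∀ z, 0 < π z) (hπ1 : ∑ z, π z = 1)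
    (ν : X → Fin n → ℝ) (ψ : Z → Fin m → ℝ)
    (h : X → ℝ) (hh : ∀ x, 0 < h x)
    (dec : Matrix (Fin n) (Fin m) ℝ × (Fin n → ℝ) → Z → X → ℝ)
    (hdec : ∀ θ z x, dec θ z x =
        h x * Real.exp (∑ i, ν x i * ((θ.1).mulVec (ψ z) + θ.2) i) /
        ∑ x', h x' * Real.exp (∑ i, ν x' i * ((θ.1).mulVec (ψ z) + θ.2) i))
    (enc : (Z → ℝ) × (X → Fin m → ℝ) → X → Z → ℝ)
    (henc : ∀ φ x z, enc φ x z = φ.1 z * Real.exp (∑ j, ψ z j * φ.2 x j) /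
        ∑ z', φ.1 z' * Real.exp (∑ j, ψ z' j * φ.2 x j))
    (L : Matrix (Fin n) (Fin m) ℝ × (Fin n → ℝ) → ℝ)
    (hL : ∀ θ, L θ = ∑ x, pd x * Real.log (∑ z, π z * dec θ z x))
    (LB : Matrix (Fin n) (Fin m) ℝ × (Fin n → ℝ) → (Z → ℝ) × (X → Fin m → ℝ) → ℝ)
    (hLB : ∀ θ φ, LB θ φ = ∑ x, pd x * ((∑ z, enc φ x z * Real.log (dec θ z x)) -
        ∑ z, enc φ x z * Real.log (enc φ x z / π z))) :
    (∀ θ φ, (∀ z, 0 < φ.1 z) → LB θ φ ≤ L θ) ∧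
    (∀ θ, ∃ φ, (∀ z, 0 < φ.1 z) ∧ LB θ φ = L θ) ∧
    sSup {y | ∃ θ φ, (∀ z, 0 < φ.1 z) ∧ y = LB θ φ} = sSup {y | ∃ θ, y = L θ} ∧
    (∀ θs φs, (∀ z, 0 < φs.1 z) →
      (∀ θ φ, (∀ z, 0 < φ.1 z) → LB θ φ ≤ LB θs φs) → ∀ θ, L θ ≤ L θs) :=
  stmt_4_general pd hpd π hπ ν ψ h hh dec hdec enc henc L hL LB hLB
end

section
/- Let $X$ and $Z$ be nonempty finite sets, $p_d$ a probability mass function on $X$, $\alpha > 0$ and $\varepsilon > 0$. Let $q(\cdot\mid x)$ and $p(\cdot\mid x)$ be probability mass functions on $Z$ for each $x \in X$ satisfying $q(z\mid x) \ge \alpha$ and $p(z\mid x) \ge \alpha$ for all $x, z$, and suppose the expected KL divergence satisfies $\sum_x p_d(x)\, D_{KL}(q(\cdot\mid x)\,\|\,p(\cdot\mid x)) \le \varepsilon$ ($\varepsilon$-tightness). Then for every $z \in Z$, $\sum_x p_d(x)\,\big(\log q(z\mid x) - \log p(z\mid x)\big)^2 \le 2\varepsilon/\alpha^2$. -/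
/-!
Each summand `q log (q / p) - q + p` of `KL(q ‖ p) = ∑ q log (q / p)` (for probability vectors
the extra terms cancel) is at least `(q - p)² / (2 max q p) ≥ (q - p)² / 2`, by the logarithm
bounds `2 (s - 1) / (s + 1) ≤ log s ≤ sinh (log s) = (s - s⁻¹) / 2` for `s ≥ 1`. So
`KL(q ‖ p) ≥ (q z - p z)² / 2` for every single `z`. On `[α, ∞)` the logarithm is
`1/α`-Lipschitz, so `(log q z - log p z)² ≤ 2 KL(q ‖ p) / α²`; averaging over `x` against `p_d`
gives the claim.
-/

open Real Finset

lemma log_le_half_sub_inv {x : ℝ} (hx : 1 ≤ x) : log x ≤ (x - x⁻¹) / 2 := by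
  rw [← sinh_log (by linarith)]
  exact self_le_sinh_iff.mpr (log_nonneg hx)

lemma two_mul_sub_div_add_le_log_div {a b : ℝ} (hb : 0 < b) (hba : b ≤ a) :
    2 * (a - b) / (a + b) ≤ log (a / b) := by
  have h := le_log_one_add_of_nonneg (x := a / b - 1) (sub_nonneg.mpr ((one_le_div hb).mpr hba))
  rwa [add_sub_cancel, show 2 * (a / b - 1) / (a / b - 1 + 2) = 2 * (a - b) / (a + b) by
    field_simp; ring] at h

lemma sq_sub_div_two_mul_max_le {a b : ℝ} (ha : 0 < a) (hb : 0 < b) :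
    (a - b) ^ 2 / (2 * max a b) ≤ a * log (a / b) - a + b := by
  rcases le_total b a with hba | hab
  · rw [max_eq_left hba]
    have hlog := two_mul_sub_div_add_le_log_div hb hba
    calc (a - b) ^ 2 / (2 * a) ≤ (a - b) ^ 2 / (a + b) := by gcongr; linarith
      _ = a * (2 * (a - b) / (a + b)) - a + b := by field_simp; ring
      _ ≤ a * log (a / b) - a + b := by gcongr
  · rw [max_eq_right hab]
    have hlog := log_le_half_sub_inv ((one_le_div ha).mpr hab)
    rw [← inv_div b a, log_inv]
    calc (a - b) ^ 2 / (2 * b) = a * -(((b / a) - (b / a)⁻¹) / 2) - a + b := by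
          field_simp; ring
      _ ≤ a * -log (b / a) - a + b := by gcongr

lemma abs_log_sub_log_le {α a b : ℝ} (hα : 0 < α) (ha : α ≤ a) (hb : α ≤ b) :
    |log a - log b| ≤ |a - b| / α := by
  wlog hba : b ≤ a generalizing a b
  · rw [abs_sub_comm, abs_sub_comm a]
    exact this hb ha (by linarith)
  have hb0 : 0 < b := hα.trans_le hb
  have ha0 : 0 < a := hb0.trans_le hba
  rw [← log_div ha0.ne' hb0.ne', abs_of_nonneg (log_nonneg ((one_le_div hb0).mpr hba)),
    abs_of_nonneg (sub_nonneg.mpr hba)]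
  calc log (a / b) ≤ a / b - 1 := log_le_sub_one_of_pos (by positivity)
    _ = (a - b) / b := by field_simp
    _ ≤ (a - b) / α := by gcongr

lemma sq_log_sub_log_le {α a b : ℝ} (hα : 0 < α) (ha : α ≤ a) (hb : α ≤ b) :
    (log a - log b) ^ 2 ≤ (a - b) ^ 2 / α ^ 2 := by
  rw [← sq_abs, ← sq_abs (a - b), ← div_pow]
  exact pow_le_pow_left₀ (abs_nonneg _) (abs_log_sub_log_le hα ha hb) 2

lemma sq_sub_div_two_le_sum_mul_log_div {Z : Type*} [Fintype Z] {q p : Z → ℝ}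
    (hq : ∀ z, 0 < q z) (hp : ∀ z, 0 < p z) (hq1 : ∑ z, q z = 1) (hp1 : ∑ z, p z = 1) (z₀ : Z) :
    (q z₀ - p z₀) ^ 2 / 2 ≤ ∑ z, q z * log (q z / p z) := by
  have hmax_pos : ∀ z, 0 < max (q z) (p z) := fun z => lt_max_of_lt_left (hq z)
  have hmax_le : ∀ z, max (q z) (p z) ≤ 1 := fun z =>
    max_le (hq1 ▸ single_le_sum (fun i _ => (hq i).le) (mem_univ z))
      (hp1 ▸ single_le_sum (fun i _ => (hp i).le) (mem_univ z))
  have hterm : ∀ z, (q z - p z) ^ 2 / (2 * max (q z) (p z)) ≤ q z * log (q z / p z) - q z + p z :=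
    fun z => sq_sub_div_two_mul_max_le (hq z) (hp z)
  have hterm_nonneg : ∀ z, 0 ≤ q z * log (q z / p z) - q z + p z := fun z =>
    (div_nonneg (sq_nonneg _) (by linarith [hmax_pos z])).trans (hterm z)
  calc (q z₀ - p z₀) ^ 2 / 2 ≤ (q z₀ - p z₀) ^ 2 / (2 * max (q z₀) (p z₀)) :=
        div_le_div_of_nonneg_left (sq_nonneg _) (by linarith [hmax_pos z₀])
          (by linarith [hmax_le z₀])
    _ ≤ q z₀ * log (q z₀ / p z₀) - q z₀ + p z₀ := hterm z₀
    _ ≤ ∑ z, (q z * log (q z / p z) - q z + p z) :=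
        single_le_sum (fun z _ => hterm_nonneg z) (mem_univ z₀)
    _ = ∑ z, q z * log (q z / p z) := by
        rw [sum_add_distrib, sum_sub_distrib, hq1, hp1, sub_add_cancel]

theorem stmt_7_general {X Z : Type*} [Fintype X] [Fintype Z]
    (pd : X → ℝ) (hpd : ∀ x, 0 ≤ pd x)
    (α ε : ℝ) (hα : 0 < α)
    (q p : X → Z → ℝ)
    (hq : ∀ x z, α ≤ q x z) (hp : ∀ x z, α ≤ p x z)
    (hq1 : ∀ x, ∑ z, q x z = 1) (hp1 : ∀ x, ∑ z, p x z = 1)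
    (htight : ∑ x, pd x * ∑ z, q x z * Real.log (q x z / p x z) ≤ ε) :
    ∀ z, ∑ x, pd x * (Real.log (q x z) - Real.log (p x z)) ^ 2 ≤ 2 * ε / α ^ 2 := by
  intro z₀
  have hlog_sq_le_kl : ∀ x, (log (q x z₀) - log (p x z₀)) ^ 2
      ≤ 2 / α ^ 2 * ∑ z, q x z * log (q x z / p x z) := fun x =>
    calc (log (q x z₀) - log (p x z₀)) ^ 2 ≤ (q x z₀ - p x z₀) ^ 2 / α ^ 2 :=
          sq_log_sub_log_le hα (hq x z₀) (hp x z₀)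
      _ = 2 / α ^ 2 * ((q x z₀ - p x z₀) ^ 2 / 2) := by ring
      _ ≤ 2 / α ^ 2 * ∑ z, q x z * log (q x z / p x z) := by
          gcongr
          exact sq_sub_div_two_le_sum_mul_log_div (fun z => hα.trans_le (hq x z))
            (fun z => hα.trans_le (hp x z)) (hq1 x) (hp1 x) z₀
  calc ∑ x, pd x * (log (q x z₀) - log (p x z₀)) ^ 2
      ≤ ∑ x, pd x * (2 / α ^ 2 * ∑ z, q x z * log (q x z / p x z)) :=
        sum_le_sum fun x _ => mul_le_mul_of_nonneg_left (hlog_sq_le_kl x) (hpd x)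
    _ = 2 / α ^ 2 * ∑ x, pd x * ∑ z, q x z * log (q x z / p x z) := by
        rw [mul_sum]; congr 1; ext x; ring
    _ ≤ 2 / α ^ 2 * ε := by gcongr
    _ = 2 * ε / α ^ 2 := by ring

/-- ε-tightness (expected KL between encoder and posterior ≤ ε), together with
lower bounds `q, p ≥ α`, bounds the expected squared log-ratio by `2ε/α²` for every `z`. -/
theorem stmt_7 {X Z : Type*} [Fintype X] [Fintype Z] [Nonempty X] [Nonempty Z]
    (pd : X → ℝ) (hpd : ∀ x, 0 ≤ pd x) (hpd1 : ∑ x, pd x = 1)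
    (α ε : ℝ) (hα : 0 < α) (hε : 0 < ε)
    (q p : X → Z → ℝ)
    (hq : ∀ x z, α ≤ q x z) (hp : ∀ x z, α ≤ p x z)
    (hq1 : ∀ x, ∑ z, q x z = 1) (hp1 : ∀ x, ∑ z, p x z = 1)
    (htight : ∑ x, pd x * ∑ z, q x z * Real.log (q x z / p x z) ≤ ε) :
    ∀ z, ∑ x, pd x * (Real.log (q x z) - Real.log (p x z)) ^ 2 ≤ 2 * ε / α ^ 2 :=
  stmt_7_general pd hpd α ε hα q p hq hp hq1 hp1 htight
end

section
/- Let $Z$ be a nonempty finite set, $\alpha > 0$, and let $q$ and $p$ be probability mass functions on $Z$ with $q(z) \ge \alpha$ and $p(z) \ge \alpha$ for all $z \in Z$. Then $\sum_{z \in Z} q(z)\,\big(\log q(z) - \log p(z)\big)^2 \le 2\,D_{KL}(q\,\|\,p)/\alpha^2$, where $D_{KL}(q\|p) = \sum_z q(z)\log(q(z)/p(z))$. -/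
lemma aux_hasDeriv (x : ℝ) (hx0 : 0 < x) :
    HasDerivAt (fun x : ℝ => x / 2 - (2 * x)⁻¹ - Real.log x)
      (1 / 2 - (-(2) / (2 * x) ^ 2) - 1 / x) x := by
  have h1 : HasDerivAt (fun x : ℝ => x / 2) (1 / 2) x := by
    simpa using (hasDerivAt_id x).div_const 2
  have h2 : HasDerivAt (fun x : ℝ => (2 * x)⁻¹) (-(2) / (2 * x) ^ 2) x := by
    have h : HasDerivAt (fun x : ℝ => 2 * x) 2 x := by
      simpa using (hasDerivAt_id x).const_mul 2
    exact h.inv (by positivity)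
  have h3 : HasDerivAt Real.log (1 / x) x := by
    simpa [one_div] using Real.hasDerivAt_log hx0.ne'
  exact (h1.sub h2).sub h3

lemma aux_hasDeriv2 (x : ℝ) (hx0 : 0 < x) :
    HasDerivAt (fun x : ℝ => Real.log x - (2 - 4 * (x + 1)⁻¹))
      (1 / x - (0 - 4 * (-(1) / (x + 1) ^ 2))) x := by
  have h3 : HasDerivAt Real.log (1 / x) x := by
    simpa [one_div] using Real.hasDerivAt_log hx0.ne'
  have h4 : HasDerivAt (fun x : ℝ => (x + 1)⁻¹) (-(1) / (x + 1) ^ 2) x := by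
    have h : HasDerivAt (fun x : ℝ => x + 1) 1 x := (hasDerivAt_id x).add_const 1
    exact h.inv (by positivity)
  exact h3.sub ((hasDerivAt_const x 2).sub (h4.const_mul 4))

/-- `log s ≤ s/2 - 1/(2s)` for `s ≥ 1`. -/
lemma log_le_half_sub (s : ℝ) (hs : 1 ≤ s) : Real.log s ≤ s / 2 - (2 * s)⁻¹ := by
  have hmono : MonotoneOn (fun x : ℝ => x / 2 - (2 * x)⁻¹ - Real.log x) (Set.Ici 1) := by
    apply monotoneOn_of_deriv_nonneg (convex_Ici 1)
    · intro x hx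
      have hx1 : (1:ℝ) ≤ x := hx
      exact ((aux_hasDeriv x (by linarith)).differentiableAt.differentiableWithinAt).continuousWithinAt
    · intro x hx
      rw [interior_Ici] at hx
      exact ((aux_hasDeriv x (by linarith [Set.mem_Ioi.mp hx])).differentiableAt).differentiableWithinAt
    · intro x hx
      rw [interior_Ici] at hx
      have hx1 : (1:ℝ) < x := hx
      rw [(aux_hasDeriv x (by linarith)).deriv]
      have key : 1 / 2 - (-(2) / (2 * x) ^ 2) - 1 / x = (x - 1) ^ 2 / (2 * x ^ 2) := by
        field_simp; ring
      rw [key]; positivity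
  have h := hmono (Set.self_mem_Ici) (Set.mem_Ici.mpr hs) hs
  simp only [Real.log_one] at h
  norm_num at h
  have e2 : (2 * s : ℝ)⁻¹ = s⁻¹ * (1 / 2) := by rw [mul_inv]; ring
  linarith [e2 ▸ h]

/-- `log s ≥ 2(s-1)/(s+1)` for `s ≥ 1`. -/
lemma log_ge_tanh (s : ℝ) (hs : 1 ≤ s) : 2 * (s - 1) / (s + 1) ≤ Real.log s := by
  have hmono : MonotoneOn (fun x : ℝ => Real.log x - (2 - 4 * (x + 1)⁻¹)) (Set.Ici 1) := by
    apply monotoneOn_of_deriv_nonneg (convex_Ici 1)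
    · intro x hx
      have hx1 : (1:ℝ) ≤ x := hx
      exact ((aux_hasDeriv2 x (by linarith)).differentiableAt.differentiableWithinAt).continuousWithinAt
    · intro x hx
      rw [interior_Ici] at hx
      exact ((aux_hasDeriv2 x (by linarith [Set.mem_Ioi.mp hx])).differentiableAt).differentiableWithinAt
    · intro x hx
      rw [interior_Ici] at hx
      have hx1 : (1:ℝ) < x := hx
      rw [(aux_hasDeriv2 x (by linarith)).deriv]
      have key : 1 / x - (0 - 4 * (-(1) / (x + 1) ^ 2)) = (x - 1) ^ 2 / (x * (x + 1) ^ 2) := by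
        field_simp; ring
      rw [key]
      have : (0:ℝ) < x := by linarith
      positivity
  have h := hmono (Set.self_mem_Ici) (Set.mem_Ici.mpr hs) hs
  simp only [Real.log_one] at h
  norm_num at h
  have hs1 : (0:ℝ) < s + 1 := by linarith
  rw [div_le_iff₀ hs1]
  have h5 : (2 - 4 * (s + 1)⁻¹) * (s + 1) = 2 * (s - 1) := by field_simp; ring
  calc 2 * (s - 1) = (2 - 4 * (s + 1)⁻¹) * (s + 1) := h5.symm
    _ ≤ Real.log s * (s + 1) := mul_le_mul_of_nonneg_right (by linarith) (by linarith)

/-- pointwise key inequality -/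
lemma key_ineq (α x y : ℝ) (hα : 0 < α) (hx : α ≤ x) (hy : α ≤ y)
    (hx1 : x ≤ 1) (hy1 : y ≤ 1) :
    x * (Real.log x - Real.log y) ^ 2 ≤ 2 / α ^ 2 * (x * Real.log (x / y) - x + y) := by
  have hx0 : 0 < x := lt_of_lt_of_le hα hx
  have hy0 : 0 < y := lt_of_lt_of_le hα hy
  -- (i) |log x - log y| ≤ |x - y| / α hence squared bound
  have lip : (Real.log x - Real.log y) ^ 2 ≤ (x - y) ^ 2 / α ^ 2 := by
    rcases le_total y x with h | h
    · have d1 : Real.log y ≤ Real.log x := Real.log_le_log hy0 h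
      have h1 : Real.log x - Real.log y = Real.log (x / y) := (Real.log_div hx0.ne' hy0.ne').symm
      have h2 : Real.log (x / y) ≤ x / y - 1 := Real.log_le_sub_one_of_pos (by positivity)
      have h3 : x / y - 1 = (x - y) / y := by field_simp
      have h4 : (x - y) / y ≤ (x - y) / α := by
        apply div_le_div_of_nonneg_left (by linarith) hα hy
      have upper : Real.log x - Real.log y ≤ (x - y) / α := by rw [h1]; linarith
      have hnb : (0:ℝ) ≤ (x - y) / α := div_nonneg (by linarith) hα.le
      have hsq := sq_le_sq'
        (by linarith [sub_nonneg.mpr d1] : -((x - y) / α) ≤ Real.log x - Real.log y) upper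
      calc (Real.log x - Real.log y) ^ 2 ≤ ((x - y) / α) ^ 2 := hsq
        _ = (x - y) ^ 2 / α ^ 2 := by rw [div_pow]
    · have d1 : Real.log x ≤ Real.log y := Real.log_le_log hx0 h
      have h1 : Real.log y - Real.log x = Real.log (y / x) := (Real.log_div hy0.ne' hx0.ne').symm
      have h2 : Real.log (y / x) ≤ y / x - 1 := Real.log_le_sub_one_of_pos (by positivity)
      have h3 : y / x - 1 = (y - x) / x := by field_simp
      have h4 : (y - x) / x ≤ (y - x) / α := by
        apply div_le_div_of_nonneg_left (by linarith) hα hx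
      have upper : Real.log y - Real.log x ≤ (y - x) / α := by rw [h1]; linarith
      have hb : (0:ℝ) ≤ (y - x) / α := by
        apply div_nonneg (by linarith) hα.le
      have hsq := sq_le_sq' (by linarith : -((y - x) / α) ≤ Real.log x - Real.log y)
        (by linarith [sub_nonneg.mpr d1] : Real.log x - Real.log y ≤ (y - x) / α)
      calc (Real.log x - Real.log y) ^ 2 ≤ ((y - x) / α) ^ 2 := hsq
        _ = (x - y) ^ 2 / α ^ 2 := by rw [div_pow]; congr 1; ring
  -- (ii) x log(x/y) - x + y ≥ (x-y)²/2
  have low : (x - y) ^ 2 / 2 ≤ x * Real.log (x / y) - x + y := by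
    rcases le_total y x with h | h
    · have hs : 1 ≤ x / y := by rw [le_div_iff₀ hy0]; linarith
      have h1 := log_ge_tanh (x / y) hs
      have h2 : 2 * (x / y - 1) / (x / y + 1) = 2 * (x - y) / (x + y) := by
        rw [div_eq_div_iff (by positivity) (by positivity)]
        field_simp
      have h3 : x * (2 * (x - y) / (x + y)) ≤ x * Real.log (x / y) := by
        apply mul_le_mul_of_nonneg_left _ hx0.le
        rw [← h2]; exact h1
      have e : x * (2 * (x - y) / (x + y)) - ((x - y) + (x - y) ^ 2 / 2)
          = (x - y) ^ 2 * (2 - (x + y)) / (2 * (x + y)) := by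
        field_simp; ring
      have hnn : (0:ℝ) ≤ (x - y) ^ 2 * (2 - (x + y)) / (2 * (x + y)) :=
        div_nonneg (mul_nonneg (sq_nonneg _) (by linarith)) (by positivity)
      linarith [e ▸ hnn]
    · have hs : 1 ≤ y / x := by rw [le_div_iff₀ hx0]; linarith
      have h1 := log_le_half_sub (y / x) hs
      have hlog : Real.log (x / y) = -Real.log (y / x) := by
        rw [← Real.log_inv]; congr 1; field_simp
      have h2 : x * Real.log (y / x) ≤ x * (y / x / 2 - (2 * (y / x))⁻¹) :=
        mul_le_mul_of_nonneg_left h1 hx0.le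
      have h3 : x * (y / x / 2 - (2 * (y / x))⁻¹) = (y ^ 2 - x ^ 2) / (2 * y) := by
        field_simp
      have e : (y - x) - (y ^ 2 - x ^ 2) / (2 * y) = (y - x) ^ 2 / (2 * y) := by
        field_simp; ring
      have h4 : (x - y) ^ 2 / 2 ≤ (y - x) - (y ^ 2 - x ^ 2) / (2 * y) := by
        rw [e]
        have : (x - y) ^ 2 = (y - x) ^ 2 := by ring
        rw [this]
        apply div_le_div_of_nonneg_left (sq_nonneg _) (by positivity) (by linarith)
      have hfin : x * Real.log (x / y) - x + y = (y - x) - x * Real.log (y / x) := by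
        rw [hlog]; ring
      rw [hfin]
      have h5 : x * Real.log (y / x) ≤ (y ^ 2 - x ^ 2) / (2 * y) := h3 ▸ h2
      linarith
  have hxle : x * ((x - y) ^ 2 / α ^ 2) ≤ 2 / α ^ 2 * ((x - y) ^ 2 / 2) := by
    have h1 : x * ((x - y) ^ 2 / α ^ 2) ≤ 1 * ((x - y) ^ 2 / α ^ 2) :=
      mul_le_mul_of_nonneg_right hx1 (by positivity)
    calc x * ((x - y) ^ 2 / α ^ 2) ≤ 1 * ((x - y) ^ 2 / α ^ 2) := h1
      _ = 2 / α ^ 2 * ((x - y) ^ 2 / 2) := by field_simp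
  calc x * (Real.log x - Real.log y) ^ 2 ≤ x * ((x - y) ^ 2 / α ^ 2) :=
        mul_le_mul_of_nonneg_left lip hx0.le
    _ ≤ 2 / α ^ 2 * ((x - y) ^ 2 / 2) := hxle
    _ ≤ 2 / α ^ 2 * (x * Real.log (x / y) - x + y) :=
        mul_le_mul_of_nonneg_left low (by positivity)

/-- for probability mass functions `q, p ≥ α > 0` on a finite set, the
`q`-weighted mean squared difference of log-probabilities is bounded by `2 D_KL(q‖p)/α²`. -/
theorem stmt_15 {Z : Type*} [Fintype Z] [Nonempty Z] (α : ℝ) (hα : 0 < α)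
    (q p : Z → ℝ) (hq : ∀ z, α ≤ q z) (hp : ∀ z, α ≤ p z)
    (hq1 : ∑ z, q z = 1) (hp1 : ∑ z, p z = 1) :
    ∑ z, q z * (Real.log (q z) - Real.log (p z)) ^ 2 ≤
      2 * (∑ z, q z * Real.log (q z / p z)) / α ^ 2 := by
  have hqle : ∀ z, q z ≤ 1 := by
    intro z
    rw [← hq1]
    exact Finset.single_le_sum (fun i _ => le_trans hα.le (hq i)) (Finset.mem_univ z)
  have hple : ∀ z, p z ≤ 1 := by
    intro z
    rw [← hp1]
    exact Finset.single_le_sum (fun i _ => le_trans hα.le (hp i)) (Finset.mem_univ z)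
  have step : ∑ z, q z * (Real.log (q z) - Real.log (p z)) ^ 2 ≤
      ∑ z, 2 / α ^ 2 * (q z * Real.log (q z / p z) - q z + p z) :=
    Finset.sum_le_sum (fun z _ =>
      key_ineq α (q z) (p z) hα (hq z) (hp z) (hqle z) (hple z))
  have heq : ∑ z, 2 / α ^ 2 * (q z * Real.log (q z / p z) - q z + p z) =
      2 * (∑ z, q z * Real.log (q z / p z)) / α ^ 2 := by
    rw [← Finset.mul_sum]
    have h : ∑ z, (q z * Real.log (q z / p z) - q z + p z) =
        (∑ z, q z * Real.log (q z / p z)) - (∑ z, q z) + (∑ z, p z) := by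
      rw [Finset.sum_add_distrib, Finset.sum_sub_distrib]
    rw [h, hq1, hp1]
    ring
  exact step.trans_eq heq
end
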